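/- Let g be a subresonance polynomial self-map of ℝ^n with invertible linear part, with inverse g⁻¹ (itself a subresonance polynomial self-map), and let X be a strictly subresonance polynomial self-map of ℝ^n. Then g ∘ (id + X) ∘ g⁻¹ equals id + Z for some strictly subresonance polynomial self-map Z of ℝ^n; that is, the group of maps of the form identity plus a strictly subresonance polynomial self-map is normalized by the subresonance polynomial diffeomorphisms. -/

import Mathlib

open MvPolynomial

/-- The minimum of the weights `w : Fin n → ℝ` (for `n ≥ 1`). -/
noncomputable def wmin {n : ℕ} (hn : 1 ≤ n) (w : Fin n → ℝ) : ℝ :=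
  Finset.univ.inf' (Finset.univ_nonempty_iff.mpr ⟨⟨0, hn⟩⟩) w

/-- The maximum of the weights `w : Fin n → ℝ` (for `n ≥ 1`). -/
noncomputable def wmax {n : ℕ} (hn : 1 ≤ n) (w : Fin n → ℝ) : ℝ :=
  Finset.univ.sup' (Finset.univ_nonempty_iff.mpr ⟨⟨0, hn⟩⟩) w

/-- The defect of the monomial with exponent multi-index `d` occurring in the
`i`-th component: `w i − Σ_j (d j)·(w j)`. -/
noncomputable def defect {n : ℕ} (w : Fin n → ℝ) (i : Fin n) (d : Fin n →₀ ℕ) : ℝ :=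
  w i - ∑ j, (d j : ℝ) * w j

/-- An `n`-tuple of polynomials with zero constant coefficients
(a polynomial self-map of `ℝ^n`). -/
def IsPolySelfMap {n : ℕ} (P : Fin n → MvPolynomial (Fin n) ℝ) : Prop :=
  ∀ i, MvPolynomial.constantCoeff (P i) = 0

/-- `P` is subresonance: every monomial occurring with nonzero coefficient in
each component has defect `≤ 0`. -/
def SubresonanceDefects {n : ℕ} (w : Fin n → ℝ)
    (P : Fin n → MvPolynomial (Fin n) ℝ) : Prop :=
  ∀ i, ∀ d ∈ (P i).support, defect w i d ≤ 0

/-- `P` is strictly subresonance: every monomial occurring with nonzero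
coefficient in each component has defect `≤ wmax`. -/
def StrictSubresonanceDefects {n : ℕ} (hn : 1 ≤ n) (w : Fin n → ℝ)
    (P : Fin n → MvPolynomial (Fin n) ℝ) : Prop :=
  ∀ i, ∀ d ∈ (P i).support, defect w i d ≤ wmax hn w

/-!
Weights make polynomials filtered: let `F c` be the span of the monomials of weight at least `c`.
Then `F a * F b ≤ F (a + b)`, and substituting `X j ↦ P j` with `P j ∈ F (w j)` preserves every
`F c`. Subresonance of `g` says `g i ∈ F (w i)`, strict subresonance of `A` says
`A i ∈ F (w i + δ)` with `δ = -wmax ≥ 0`. Substituting `X + A` into an element of `F c` changes it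
by an element of `F (c + δ)` (telescope the products of powers), so `g ∘ (id + A) = g + E` with
`E i ∈ F (w i + δ)`, and composing with `g⁻¹` gives `id + E ∘ g⁻¹`, where `E ∘ g⁻¹` stays in the
same filtration step.
-/

namespace MvPolynomial

section Filtration

variable {σ R M : Type*} [CommSemiring R] [AddCommMonoid M] [PartialOrder M] (w : σ → M)

noncomputable def weightedFiltration (c : M) : Submodule R (MvPolynomial σ R) :=
  restrictSupport R {d | c ≤ Finsupp.weight w d}

variable {w}

theorem mem_weightedFiltration_iff {c : M} {p : MvPolynomial σ R} :
    p ∈ weightedFiltration w c ↔ ∀ d ∈ p.support, c ≤ Finsupp.weight w d :=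
  Iff.rfl

theorem weightedFiltration_antitone :
    Antitone (weightedFiltration w : M → Submodule R (MvPolynomial σ R)) :=
  fun _ _ h => restrictSupport_mono R fun _ hd => le_trans h hd

theorem X_mem_weightedFiltration (j : σ) :
    (X j : MvPolynomial σ R) ∈ weightedFiltration w (w j) := by
  classical
  nontriviality R
  simp [mem_weightedFiltration_iff, support_X, Finsupp.weight_single]

theorem one_mem_weightedFiltration :
    (1 : MvPolynomial σ R) ∈ weightedFiltration w 0 := by
  rw [mem_weightedFiltration_iff, one_def]
  intro d hd
  rw [Finset.mem_singleton.mp (support_monomial_subset hd), map_zero]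

variable [IsOrderedAddMonoid M]

theorem mul_mem_weightedFiltration {a b : M} {p q : MvPolynomial σ R}
    (hp : p ∈ weightedFiltration w a) (hq : q ∈ weightedFiltration w b) :
    p * q ∈ weightedFiltration w (a + b) := by
  classical
  rw [mem_weightedFiltration_iff] at *
  intro d hd
  obtain ⟨e, he, f, hf, rfl⟩ := Finset.mem_add.mp (support_mul p q hd)
  rw [map_add]
  exact add_le_add (hp e he) (hq f hf)

theorem prod_mem_weightedFiltration {ι : Type*} {s : Finset ι} {c : ι → M}
    {f : ι → MvPolynomial σ R} (hf : ∀ i ∈ s, f i ∈ weightedFiltration w (c i)) :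
    ∏ i ∈ s, f i ∈ weightedFiltration w (∑ i ∈ s, c i) := by
  classical
  induction s using Finset.induction with
  | empty => simpa using one_mem_weightedFiltration
  | insert a s ha ih =>
    rw [Finset.prod_insert ha, Finset.sum_insert ha]
    exact mul_mem_weightedFiltration (hf a (Finset.mem_insert_self a s))
      (ih fun i hi => hf i (Finset.mem_insert_of_mem hi))

theorem pow_mem_weightedFiltration {c : M} {p : MvPolynomial σ R}
    (hp : p ∈ weightedFiltration w c) (k : ℕ) : p ^ k ∈ weightedFiltration w (k • c) := by
  simpa using prod_mem_weightedFiltration (s := Finset.range k) fun _ _ => hp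

theorem bind₁_monomial_one_mem_weightedFiltration {P : σ → MvPolynomial σ R}
    (hP : ∀ j, P j ∈ weightedFiltration w (w j)) (d : σ →₀ ℕ) :
    bind₁ P (monomial d 1) ∈ weightedFiltration w (Finsupp.weight w d) := by
  rw [bind₁_monomial, C_1, one_mul, Finsupp.weight_apply, Finsupp.sum]
  exact prod_mem_weightedFiltration fun j _ => pow_mem_weightedFiltration (hP j) (d j)

theorem bind₁_mem_weightedFiltration {P : σ → MvPolynomial σ R}
    (hP : ∀ j, P j ∈ weightedFiltration w (w j)) {c : M} {q : MvPolynomial σ R}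
    (hq : q ∈ weightedFiltration w c) : bind₁ P q ∈ weightedFiltration w c := by
  suffices h : weightedFiltration w c ≤ (weightedFiltration w c).comap (bind₁ P).toLinearMap from
    h hq
  conv_lhs => rw [weightedFiltration, restrictSupport_eq_span]
  rw [Submodule.span_le]
  rintro _ ⟨d, hd, rfl⟩
  exact weightedFiltration_antitone hd (bind₁_monomial_one_mem_weightedFiltration hP d)

end Filtration

section Perturbation

variable {σ R M : Type*} [CommRing R] [AddCommMonoid M] [PartialOrder M] [IsOrderedAddMonoid M]
  {w : σ → M} {δ : M}

theorem prod_sub_prod_mem_weightedFiltration {ι : Type*} {s : Finset ι} {c : ι → M}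
    {f g : ι → MvPolynomial σ R} (hf : ∀ i ∈ s, f i ∈ weightedFiltration w (c i))
    (hg : ∀ i ∈ s, g i ∈ weightedFiltration w (c i))
    (hfg : ∀ i ∈ s, f i - g i ∈ weightedFiltration w (c i + δ)) :
    ∏ i ∈ s, f i - ∏ i ∈ s, g i ∈ weightedFiltration w (∑ i ∈ s, c i + δ) := by
  classical
  induction s using Finset.induction with
  | empty => simp
  | insert a s ha ih =>
    have hs : ∀ {P : ι → Prop}, (∀ i ∈ insert a s, P i) → ∀ i ∈ s, P i :=
      fun h i hi => h i (Finset.mem_insert_of_mem hi)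
    have ha' := Finset.mem_insert_self a s
    rw [Finset.prod_insert ha, Finset.prod_insert ha, Finset.sum_insert ha,
      show f a * ∏ i ∈ s, f i - g a * ∏ i ∈ s, g i
        = f a * (∏ i ∈ s, f i - ∏ i ∈ s, g i) + (f a - g a) * ∏ i ∈ s, g i by ring]
    refine add_mem ?_ ?_
    · rw [add_assoc]
      exact mul_mem_weightedFiltration (hf a ha') (ih (hs hf) (hs hg) (hs hfg))
    · rw [add_right_comm]
      exact mul_mem_weightedFiltration (hfg a ha') (prod_mem_weightedFiltration (hs hg))

theorem pow_sub_pow_mem_weightedFiltration {c : M} {p q : MvPolynomial σ R}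
    (hp : p ∈ weightedFiltration w c) (hq : q ∈ weightedFiltration w c)
    (hpq : p - q ∈ weightedFiltration w (c + δ)) (k : ℕ) :
    p ^ k - q ^ k ∈ weightedFiltration w (k • c + δ) := by
  simpa using prod_sub_prod_mem_weightedFiltration (s := Finset.range k)
    (fun _ _ => hp) (fun _ _ => hq) (fun _ _ => hpq)

variable {P : σ → MvPolynomial σ R}

theorem bind₁_monomial_one_sub_mem_weightedFiltration (hδ : 0 ≤ δ)
    (hP : ∀ j, P j - X j ∈ weightedFiltration w (w j + δ)) (d : σ →₀ ℕ) :
    bind₁ P (monomial d 1) - monomial d 1 ∈ weightedFiltration w (Finsupp.weight w d + δ) := by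
  have hP' (j : σ) : P j ∈ weightedFiltration w (w j) := by
    rw [← sub_add_cancel (P j) (X j)]
    exact add_mem (weightedFiltration_antitone (le_add_of_nonneg_right hδ) (hP j))
      (X_mem_weightedFiltration j)
  rw [bind₁_monomial, monomial_eq, C_1, one_mul, one_mul, Finsupp.prod, Finsupp.weight_apply,
    Finsupp.sum]
  exact prod_sub_prod_mem_weightedFiltration
    (fun j _ => pow_mem_weightedFiltration (hP' j) (d j))
    (fun j _ => pow_mem_weightedFiltration (X_mem_weightedFiltration j) (d j))
    (fun j _ => pow_sub_pow_mem_weightedFiltration (hP' j) (X_mem_weightedFiltration j) (hP j) _)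

theorem bind₁_sub_mem_weightedFiltration (hδ : 0 ≤ δ)
    (hP : ∀ j, P j - X j ∈ weightedFiltration w (w j + δ)) {c : M} {q : MvPolynomial σ R}
    (hq : q ∈ weightedFiltration w c) : bind₁ P q - q ∈ weightedFiltration w (c + δ) := by
  let L : MvPolynomial σ R →ₗ[R] MvPolynomial σ R := (bind₁ P).toLinearMap - LinearMap.id
  have hL (p : MvPolynomial σ R) : L p = bind₁ P p - p := rfl
  suffices h : weightedFiltration w c ≤ (weightedFiltration w (c + δ)).comap L from hL q ▸ h hq
  conv_lhs => rw [weightedFiltration, restrictSupport_eq_span]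
  rw [Submodule.span_le]
  rintro _ ⟨d, hd, rfl⟩
  rw [SetLike.mem_coe, Submodule.mem_comap, hL]
  exact weightedFiltration_antitone (add_le_add_left hd δ)
    (bind₁_monomial_one_sub_mem_weightedFiltration hδ hP d)

end Perturbation

theorem constantCoeff_bind₁ {σ R : Type*} [CommSemiring R] {P : σ → MvPolynomial σ R}
    (hP : ∀ j, constantCoeff (P j) = 0) (q : MvPolynomial σ R) :
    constantCoeff (bind₁ P q) = constantCoeff q := by
  have h : constantCoeff.comp (bind₁ P).toRingHom = constantCoeff :=
    ringHom_ext (by simp) (by simp [hP])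
  exact RingHom.congr_fun h q

end MvPolynomial

open MvPolynomial

section Subresonance

variable {n : ℕ} {w : Fin n → ℝ}

theorem defect_le_iff {i : Fin n} {d : Fin n →₀ ℕ} {c : ℝ} :
    defect w i d ≤ c ↔ w i - c ≤ Finsupp.weight w d := by
  simp only [defect, Finsupp.weight_eq_sum, nsmul_eq_mul]
  constructor <;> intro h <;> linarith

theorem subresonanceDefects_iff {P : Fin n → MvPolynomial (Fin n) ℝ} :
    SubresonanceDefects w P ↔ ∀ i, P i ∈ weightedFiltration w (w i) := by
  simp only [SubresonanceDefects, mem_weightedFiltration_iff, defect_le_iff, sub_zero]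

theorem strictSubresonanceDefects_iff (hn : 1 ≤ n) {P : Fin n → MvPolynomial (Fin n) ℝ} :
    StrictSubresonanceDefects hn w P ↔ ∀ i, P i ∈ weightedFiltration w (w i - wmax hn w) := by
  simp only [StrictSubresonanceDefects, mem_weightedFiltration_iff, defect_le_iff]

theorem wmax_nonpos (hn : 1 ≤ n) (hw : ∀ j, w j ≤ 0) : wmax hn w ≤ 0 :=
  Finset.sup'_le _ _ fun j _ => hw j

end Subresonance

theorem strict_subresonance_normalized_general (n : ℕ) (hn : 1 ≤ n) (w : Fin n → ℝ)
    (hw : ∀ j, w j < 0) (g ginv A : Fin n → MvPolynomial (Fin n) ℝ)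
    (hg : SubresonanceDefects w g)
    (hginv0 : IsPolySelfMap ginv) (hginv : SubresonanceDefects w ginv)
    (hleft : ∀ i, MvPolynomial.bind₁ ginv (g i) = MvPolynomial.X i)
    (hA0 : IsPolySelfMap A) (hA : StrictSubresonanceDefects hn w A) :
    ∃ Z : Fin n → MvPolynomial (Fin n) ℝ,
      IsPolySelfMap Z ∧ StrictSubresonanceDefects hn w Z ∧
      ∀ i, MvPolynomial.bind₁ ginv
            (MvPolynomial.bind₁ (fun j => MvPolynomial.X j + A j) (g i))
          = MvPolynomial.X i + Z i := by
  set E := fun i => bind₁ (fun j => X j + A j) (g i) - g i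
  have hE (i : Fin n) : E i ∈ weightedFiltration w (w i - wmax hn w) := by
    rw [sub_eq_add_neg]
    refine bind₁_sub_mem_weightedFiltration ?_ (fun j => ?_) (subresonanceDefects_iff.1 hg i)
    · exact neg_nonneg.2 (wmax_nonpos hn fun j => (hw j).le)
    · rw [add_sub_cancel_left, ← sub_eq_add_neg]
      exact (strictSubresonanceDefects_iff hn).1 hA j
  refine ⟨fun i => bind₁ ginv (E i), fun i => ?_, ?_, fun i => ?_⟩
  · rw [constantCoeff_bind₁ hginv0, map_sub, constantCoeff_bind₁ (by simp [hA0 _]), sub_self]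
  · exact (strictSubresonanceDefects_iff hn).2 fun i =>
      bind₁_mem_weightedFiltration (subresonanceDefects_iff.1 hginv) (hE i)
  · rw [← hleft i, ← map_add, add_sub_cancel]

/-- If `g` is a subresonance polynomial self-map with (subresonance)
inverse `ginv`, and `A` is a strictly subresonance polynomial self-map, then
`g ∘ (id + A) ∘ g⁻¹ = id + Z` for some strictly subresonance polynomial self-map `Z`;
i.e. the group of maps of the form identity plus a strictly subresonance polynomial
self-map is normalized by the subresonance polynomial diffeomorphisms. -/
theorem strict_subresonance_normalized (n : ℕ) (hn : 1 ≤ n) (w : Fin n → ℝ)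
    (hw : ∀ j, w j < 0) (g ginv A : Fin n → MvPolynomial (Fin n) ℝ)
    (hg0 : IsPolySelfMap g) (hg : SubresonanceDefects w g)
    (hginv0 : IsPolySelfMap ginv) (hginv : SubresonanceDefects w ginv)
    (hleft : ∀ i, MvPolynomial.bind₁ ginv (g i) = MvPolynomial.X i)
    (hright : ∀ i, MvPolynomial.bind₁ g (ginv i) = MvPolynomial.X i)
    (hA0 : IsPolySelfMap A) (hA : StrictSubresonanceDefects hn w A) :
    ∃ Z : Fin n → MvPolynomial (Fin n) ℝ,
      IsPolySelfMap Z ∧ StrictSubresonanceDefects hn w Z ∧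
      ∀ i, MvPolynomial.bind₁ ginv
            (MvPolynomial.bind₁ (fun j => MvPolynomial.X j + A j) (g i))
          = MvPolynomial.X i + Z i :=
  strict_subresonance_normalized_general n hn w hw g ginv A hg hginv0 hginv hleft hA0 hA
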